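/- arXiv:2001.09364 — 4 statements merged into one kernel-verified Lean document; each statement's English description precedes it below -/
import Mathlib

section
/- Let S be a nonempty finite subset of ℝⁿ whose centroid is 0 and whose affine span is all of ℝⁿ, and let P = convexHull ℝ S. If F is an exposed face of P with F ≠ P, then 0 ∉ F. (No proper face of a full-dimensional polytope contains its centroid.) -/
/-! If `0` lay on a face exposed by `l`, then `l ≤ 0` on `S`; as the points of `S` sum to `0`,
`l` vanishes on `S`, hence on its affine span, which is everything. So `l = 0` and the face
is the whole polytope. -/

theorem Finset.sum_eq_zero_of_inv_card_smul_sum_eq_zero {𝕜 E : Type*} [DivisionRing 𝕜]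
    [CharZero 𝕜] [AddCommGroup E] [Module 𝕜 E] {S : Finset E}
    (h : (S.card : 𝕜)⁻¹ • ∑ x ∈ S, x = 0) : ∑ x ∈ S, x = 0 := by
  rcases S.eq_empty_or_nonempty with rfl | hS
  · exact Finset.sum_empty
  · exact (smul_eq_zero.mp h).resolve_left (by simp [hS.ne_empty])

theorem map_eq_zero_of_sum_eq_zero_of_nonpos {E M F : Type*} [AddCommMonoid E]
    [AddCommMonoid M] [PartialOrder M] [IsOrderedCancelAddMonoid M] [FunLike F E M]
    [AddMonoidHomClass F E M] (l : F) {S : Finset E} (hsum : ∑ x ∈ S, x = 0)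
    (hl : ∀ x ∈ S, l x ≤ 0) : ∀ x ∈ S, l x = 0 :=
  (Finset.sum_eq_zero_iff_of_nonpos hl).mp (by rw [← map_sum, hsum, map_zero])

theorem LinearMap.eq_zero_of_affineSpan_eq_top {k V W : Type*} [Ring k] [AddCommGroup V]
    [Module k V] [AddCommGroup W] [Module k W] {s : Set V} (hs : affineSpan k s = ⊤)
    (l : V →ₗ[k] W) (hl : ∀ x ∈ s, l x = 0) : l = 0 := by
  have h := AffineMap.ext_on hs (f := l.toAffineMap) (g := 0) hl
  ext x
  exact congr($h x)

theorem IsExposed.eq_of_zero_mem_of_sum_eq_zero {𝕜 E : Type*} [Field 𝕜] [LinearOrder 𝕜]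
    [IsStrictOrderedRing 𝕜] [TopologicalSpace 𝕜] [AddCommGroup E] [TopologicalSpace E]
    [Module 𝕜 E] {S : Finset E} {A F : Set E} (hspan : affineSpan 𝕜 (S : Set E) = ⊤)
    (hsum : ∑ x ∈ S, x = 0) (hSA : (S : Set E) ⊆ A) (hF : IsExposed 𝕜 A F) (h0 : 0 ∈ F) :
    F = A := by
  obtain ⟨l, rfl⟩ := hF ⟨0, h0⟩
  have hle : ∀ y ∈ A, l y ≤ 0 := fun y hy => by simpa using h0.2 y hy
  have hS : ∀ x ∈ S, l x = 0 :=
    map_eq_zero_of_sum_eq_zero_of_nonpos l hsum fun x hx => hle x (hSA hx)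
  obtain rfl : l = 0 :=
    ContinuousLinearMap.coe_injective (LinearMap.eq_zero_of_affineSpan_eq_top hspan _ hS)
  simp

theorem centroid_not_mem_proper_face_general (n : ℕ) (S : Finset (EuclideanSpace ℝ (Fin n)))
    (hcent : (S.card : ℝ)⁻¹ • ∑ x ∈ S, x = 0)
    (hspan : affineSpan ℝ (S : Set (EuclideanSpace ℝ (Fin n))) = ⊤)
    (P F : Set (EuclideanSpace ℝ (Fin n)))
    (hP : P = convexHull ℝ (S : Set (EuclideanSpace ℝ (Fin n))))
    (hF : IsExposed ℝ P F) (hFP : F ≠ P) :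
    (0 : EuclideanSpace ℝ (Fin n)) ∉ F := fun h0 =>
  hFP <| hF.eq_of_zero_mem_of_sum_eq_zero hspan
    (Finset.sum_eq_zero_of_inv_card_smul_sum_eq_zero hcent)
    (hP ▸ subset_convexHull ℝ _) h0

/-- No proper exposed face of a full-dimensional polytope contains its
centroid: if `S ⊆ ℝⁿ` is finite, nonempty, has centroid `0` and affinely spans `ℝⁿ`, and
`F` is a nonempty exposed face of `P = conv S` with `F ≠ P`, then `0 ∉ F`. -/
theorem centroid_not_mem_proper_face (n : ℕ) (S : Finset (EuclideanSpace ℝ (Fin n)))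
    (hS : S.Nonempty)
    (hcent : (S.card : ℝ)⁻¹ • ∑ x ∈ S, x = 0)
    (hspan : affineSpan ℝ (S : Set (EuclideanSpace ℝ (Fin n))) = ⊤)
    (P F : Set (EuclideanSpace ℝ (Fin n)))
    (hP : P = convexHull ℝ (S : Set (EuclideanSpace ℝ (Fin n))))
    (hF : IsExposed ℝ P F) (hFne : F.Nonempty) (hFP : F ≠ P) :
    (0 : EuclideanSpace ℝ (Fin n)) ∉ F :=
  centroid_not_mem_proper_face_general n S hcent hspan P F hP hF hFP
end

section
/- Let C ⊆ ℝⁿ be a set and let F be a nonempty exposed face of C (IsExposed ℝ C F). Then F = C ∩ (affineSpan ℝ F : Set ℝⁿ). That is, an exposed face of a convex body is recovered as the intersection of the body with the affine span of the face. -/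
/-! The functional exposing `F` is constant on `F`, hence (being affine) on its affine span, so
every point of `C` in that span also maximizes the functional over `C` and thus lies in `F`. -/

open Set

theorem AffineMap.eq_of_mem_affineSpan {k V₁ P₁ V₂ P₂ : Type*} [Ring k]
    [AddCommGroup V₁] [Module k V₁] [AddTorsor V₁ P₁]
    [AddCommGroup V₂] [Module k V₂] [AddTorsor V₂ P₂]
    (f : P₁ →ᵃ[k] P₂) {s : Set P₁} {c : P₂} (hs : ∀ y ∈ s, f y = c) {x : P₁}
    (hx : x ∈ affineSpan k s) : f x = c := by
  have hmap : f x ∈ affineSpan k (f '' s) :=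
    AffineSubspace.map_span f s ▸ AffineSubspace.mem_map_of_mem f hx
  have himage : f '' s ⊆ {c} := by
    rintro _ ⟨y, hy, rfl⟩
    exact hs y hy
  exact (AffineSubspace.mem_affineSpan_singleton k V₂).1 (affineSpan_mono k himage hmap)

theorem IsExposed.eq_inter_affineSpan {𝕜 E : Type*} [Ring 𝕜] [PartialOrder 𝕜]
    [TopologicalSpace 𝕜] [AddCommGroup E] [TopologicalSpace E] [Module 𝕜 E] {A B : Set E}
    (hAB : IsExposed 𝕜 A B) (hB : B.Nonempty) : B = A ∩ affineSpan 𝕜 B := by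
  obtain ⟨l, rfl⟩ := hAB hB
  obtain ⟨w, hwA, hw⟩ := hB
  refine Subset.antisymm (fun x hx => ⟨hx.1, subset_affineSpan 𝕜 _ hx⟩) ?_
  rintro x ⟨hxA, hxspan⟩
  have hconst : ∀ y ∈ {x ∈ A | ∀ y ∈ A, l y ≤ l x}, l y = l w :=
    fun y hy => le_antisymm (hw y hy.1) (hy.2 w hwA)
  have hlx : l x = l w := (l : E →ₗ[𝕜] 𝕜).toAffineMap.eq_of_mem_affineSpan hconst hxspan
  exact ⟨hxA, fun y hy => hlx ▸ hw y hy⟩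

/-- A nonempty exposed face `F` of a set `C ⊆ ℝⁿ` is recovered as the
intersection of `C` with the affine span of `F`. -/
theorem exposed_face_eq_inter_affineSpan (n : ℕ)
    (C F : Set (EuclideanSpace ℝ (Fin n)))
    (hF : IsExposed ℝ C F) (hFne : F.Nonempty) :
    F = C ∩ (affineSpan ℝ F : Set (EuclideanSpace ℝ (Fin n))) :=
  hF.eq_inter_affineSpan hFne
end

section
/- Let C ⊆ ℝⁿ be a set and let F and F' be nonempty exposed faces of C (IsExposed ℝ C F and IsExposed ℝ C F'). If affineSpan ℝ F = affineSpan ℝ F', then F = F'. In particular, an affine subspace cannot contain two distinct exposed faces that both span it. -/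
/-! A functional exposing `F` is constant on `F`, hence on `affineSpan ℝ F`, so every point of
`C` in that span maximises it and lies in `F`. Two exposed faces with the same span therefore
contain each other. -/

theorem AffineMap.apply_eq_of_mem_affineSpan {k P₁ P₂ V₁ V₂ : Type*} [Ring k]
    [AddCommGroup V₁] [Module k V₁] [AddTorsor V₁ P₁] [AddCommGroup V₂] [Module k V₂]
    [AddTorsor V₂ P₂] {f : P₁ →ᵃ[k] P₂} {s : Set P₁} {c : P₂} (hf : ∀ x ∈ s, f x = c)
    {z : P₁} (hz : z ∈ affineSpan k s) : f z = c := by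
  have hle : affineSpan k s ≤ (affineSpan k {c}).comap f :=
    affineSpan_le.2 fun x hx => by simp [hf x hx]
  simpa using hle hz

theorem IsExposed.inter_affineSpan_subset {𝕜 E : Type*} [Ring 𝕜] [PartialOrder 𝕜]
    [TopologicalSpace 𝕜] [AddCommGroup E] [TopologicalSpace E] [Module 𝕜 E] {C F : Set E}
    (hF : IsExposed 𝕜 C F) : C ∩ affineSpan 𝕜 F ⊆ F := by
  rintro z ⟨hzC, hzF⟩
  obtain rfl | ⟨x₀, hx₀⟩ := F.eq_empty_or_nonempty
  · simp at hzF
  obtain ⟨l, rfl⟩ := hF ⟨x₀, hx₀⟩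
  have hl_const : ∀ x ∈ l.toExposed C, l.toLinearMap.toAffineMap x = l x₀ := fun x hx =>
    le_antisymm (hx₀.2 x hx.1) (hx.2 x₀ hx₀.1)
  have hlz : l z = l x₀ := AffineMap.apply_eq_of_mem_affineSpan hl_const hzF
  exact ⟨hzC, fun y hy => hlz ▸ hx₀.2 y hy⟩

theorem exposed_faces_eq_of_affineSpan_eq_general (n : ℕ)
    (C F F' : Set (EuclideanSpace ℝ (Fin n)))
    (hF : IsExposed ℝ C F)
    (hF' : IsExposed ℝ C F')
    (hspan : affineSpan ℝ F = affineSpan ℝ F') :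
    F = F' := by
  apply Set.Subset.antisymm
  · exact fun x hx => hF'.inter_affineSpan_subset ⟨hF.subset hx, hspan ▸ subset_affineSpan ℝ F hx⟩
  · exact fun x hx => hF.inter_affineSpan_subset ⟨hF'.subset hx, hspan ▸ subset_affineSpan ℝ F' hx⟩

/-- Two nonempty exposed faces of a set `C ⊆ ℝⁿ` with the same affine
span are equal. -/
theorem exposed_faces_eq_of_affineSpan_eq (n : ℕ)
    (C F F' : Set (EuclideanSpace ℝ (Fin n)))
    (hF : IsExposed ℝ C F) (hFne : F.Nonempty)
    (hF' : IsExposed ℝ C F') (hF'ne : F'.Nonempty)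
    (hspan : affineSpan ℝ F = affineSpan ℝ F') :
    F = F' :=
  exposed_faces_eq_of_affineSpan_eq_general n C F F' hF hF' hspan
end

section
/- Let D be a simple graph on a finite vertex type V and let f₀ : V → Fin 3 be a decoration that never takes the value 2. If f is obtained from f₀ by any finite number of applications of the rule (★), then no two adjacent vertices u, v of D satisfy f u = 2 and f v = 0. (In any decoration reachable by the rule (★), vertices decorated 2 are never adjacent to vertices decorated 0.) -/
/-- The transformation rule `(★)` of Champagne–Kjiri–Patera–Sharp on `{0,1,2}`-decorated
Coxeter diagrams: given a decoration `f` and a vertex `w` (with `f w = 1`), the new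
decoration sends `v` to `2` if `f v = 2` or `v = w`; to `1` if (`f v = 1` and `v ≠ w`) or
(`f v = 0` and `v` is adjacent to `w`); and to `0` otherwise. -/
def starRule {V : Type*} [DecidableEq V] (D : SimpleGraph V) [DecidableRel D.Adj]
    (f : V → Fin 3) (w : V) : V → Fin 3 := fun v =>
  if f v = 2 ∨ v = w then 2
  else if (f v = 1 ∧ v ≠ w) ∨ (f v = 0 ∧ D.Adj v w) then 1
  else 0

/-- `f` is obtained from `f₀` by `k` successive applications of the rule `(★)`, each
applied at a vertex decorated `1` at the time of application. -/
def ReachedIn {V : Type*} [DecidableEq V] (D : SimpleGraph V) [DecidableRel D.Adj]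
    (f₀ : V → Fin 3) (k : ℕ) (f : V → Fin 3) : Prop :=
  ∃ g : ℕ → (V → Fin 3), g 0 = f₀ ∧ g k = f ∧
    ∀ i < k, ∃ w : V, g i w = 1 ∧ g (i + 1) = starRule D (g i) w

/-! The property "no vertex decorated `2` is adjacent to a vertex decorated `0`" holds vacuously
for a `2`-free decoration and is preserved by every application of `(★)`: the only new `2` is the
vertex `w`, and a vertex that is `0` after the step was `0` before it and is not adjacent to `w`. -/

section StarRule

variable {V : Type*} [DecidableEq V] (D : SimpleGraph V) [DecidableRel D.Adj]

theorem starRule_eq_two_iff (f : V → Fin 3) (w v : V) :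
    starRule D f w v = 2 ↔ f v = 2 ∨ v = w := by
  unfold starRule
  split_ifs <;> simp_all

theorem starRule_eq_zero_iff (f : V → Fin 3) (w v : V) :
    starRule D f w v = 0 ↔ f v = 0 ∧ v ≠ w ∧ ¬D.Adj v w := by
  unfold starRule
  split_ifs <;> grind

def TwoZeroSeparated (f : V → Fin 3) : Prop :=
  ∀ u v, D.Adj u v → f u = 2 → f v ≠ 0

omit [DecidableEq V] [DecidableRel D.Adj] in
theorem twoZeroSeparated_of_ne_two {f : V → Fin 3} (hf : ∀ v, f v ≠ 2) :
    TwoZeroSeparated D f :=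
  fun u _ _ hu => absurd hu (hf u)

theorem TwoZeroSeparated.starRule {f : V → Fin 3} (hf : TwoZeroSeparated D f) (w : V) :
    TwoZeroSeparated D (starRule D f w) := by
  intro u v huv hu hv
  obtain ⟨hv0, -, hvw⟩ := (starRule_eq_zero_iff D f w v).1 hv
  rcases (starRule_eq_two_iff D f w u).1 hu with hu2 | rfl
  · exact hf u v huv hu2 hv0
  · exact hvw huv.symm

theorem ReachedIn.induction {P : (V → Fin 3) → Prop} {f₀ f : V → Fin 3} {k : ℕ}
    (hf : ReachedIn D f₀ k f) (h₀ : P f₀)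
    (hstep : ∀ g w, g w = 1 → P g → P (starRule D g w)) : P f := by
  obtain ⟨g, hg0, hgk, hg⟩ := hf
  suffices ∀ i ≤ k, P (g i) from hgk ▸ this k le_rfl
  intro i
  induction i with
  | zero => exact fun _ => hg0 ▸ h₀
  | succ i ih =>
    intro hi
    obtain ⟨w, hw, hgi⟩ := hg i hi
    exact hgi ▸ hstep (g i) w hw (ih (by omega))

end StarRule

theorem no_adjacent_two_zero_general {V : Type*} [DecidableEq V]
    (D : SimpleGraph V) [DecidableRel D.Adj]
    (f₀ : V → Fin 3) (h₀ : ∀ v, f₀ v ≠ 2)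
    (k : ℕ) (f : V → Fin 3) (hf : ReachedIn D f₀ k f) :
    ∀ u v : V, D.Adj u v → ¬(f u = 2 ∧ f v = 0) := by
  have hsep : TwoZeroSeparated D f :=
    hf.induction D (twoZeroSeparated_of_ne_two D h₀) fun _ w _ hg => hg.starRule D w
  exact fun u v huv ⟨hu, hv⟩ => hsep u v huv hu hv

/-- In any decoration reachable from a `2`-free decoration by the rule
`(★)`, a vertex decorated `2` is never adjacent to a vertex decorated `0`. -/
theorem no_adjacent_two_zero {V : Type*} [Fintype V] [DecidableEq V]
    (D : SimpleGraph V) [DecidableRel D.Adj]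
    (f₀ : V → Fin 3) (h₀ : ∀ v, f₀ v ≠ 2)
    (k : ℕ) (f : V → Fin 3) (hf : ReachedIn D f₀ k f) :
    ∀ u v : V, D.Adj u v → ¬(f u = 2 ∧ f v = 0) :=
  no_adjacent_two_zero_general D f₀ h₀ k f hf
end
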